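/- As z → x_{p−1} = a with Im z > 0, ( D(z) − √(s_{p−1}) ) / √(z−a) converges to 2i √(s_{p−1}) d_{x_{p−1}} / √(b−a), where d_{x_{p−1}} = Σ_{j∈{0,…,m}∖{p−1,p}} β_j √(|x_j−b|)/√(|x_j−a|). Equivalently, D(z) = √(s_{p−1}) ( 1 + (2i d_{x_{p−1}}/√(b−a)) √(z−a) + O(z−a) ) as z → a in the upper half-plane. -/

import Mathlib

/-- The principal complex square root. -/
noncomputable def csqrt (w : ℂ) : ℂ := w ^ ((1 : ℂ) / 2)

/-- `β_j = (1/(2πi)) log(s_j/s_{j+1})`. -/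
noncomputable def betaCoef (s : ℕ → ℝ) (j : ℕ) : ℂ :=
  1 / (2 * ↑Real.pi * Complex.I) * ↑(Real.log (s j / s (j + 1)))

/-- `R_j(z)` for `0 ≤ j ≤ p−2` (so `x_j < a < b`). -/
noncomputable def Rlow (a b xj : ℝ) (z : ℂ) : ℂ :=
  (csqrt (z - ↑a) * ↑(Real.sqrt (b - xj)) - csqrt (z - ↑b) * ↑(Real.sqrt (a - xj))) /
  (csqrt (z - ↑a) * ↑(Real.sqrt (b - xj)) + csqrt (z - ↑b) * ↑(Real.sqrt (a - xj)))

/-- `R_j(z)` for `p+1 ≤ j ≤ m` (so `a < b < x_j`). -/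
noncomputable def Rhigh (a b xj : ℝ) (z : ℂ) : ℂ :=
  (csqrt (z - ↑b) * ↑(Real.sqrt (xj - a)) - csqrt (z - ↑a) * ↑(Real.sqrt (xj - b))) /
  (csqrt (z - ↑b) * ↑(Real.sqrt (xj - a)) + csqrt (z - ↑a) * ↑(Real.sqrt (xj - b)))

/-- The Szegő-type function `D` of the `s_p = 0` analysis:
`D(z) = ∏_{j=0}^{p−2} R_j(z)^{β_j} · ∏_{j=p+1}^m R_j(z)^{β_j}` for `Im z > 0`,
and the same product with exponents `−β_j` for `Im z < 0`. -/
noncomputable def szegoDGap (m p : ℕ) (x s : ℕ → ℝ) (z : ℂ) : ℂ :=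
  if 0 < z.im then
    (∏ j ∈ Finset.range (p - 1), Rlow (x (p - 1)) (x p) (x j) z ^ betaCoef s j) *
      (∏ j ∈ Finset.Icc (p + 1) m, Rhigh (x (p - 1)) (x p) (x j) z ^ betaCoef s j)
  else
    (∏ j ∈ Finset.range (p - 1), Rlow (x (p - 1)) (x p) (x j) z ^ (-betaCoef s j)) *
      (∏ j ∈ Finset.Icc (p + 1) m, Rhigh (x (p - 1)) (x p) (x j) z ^ (-betaCoef s j))


open Complex Filter Real Topology

lemma csqrt_mul_self {x : ℂ} (hx : x ≠ 0) : csqrt x * csqrt x = x := by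
  rw [csqrt, ← Complex.cpow_add _ _ hx]
  norm_num

lemma csqrt_re (x : ℂ) : (csqrt x).re = Real.sqrt ((‖x‖ + x.re) / 2) := by
  rw [csqrt, one_div, Complex.cpow_inv_two_re]

lemma csqrt_im_of_im_nonneg {x : ℂ} (hx : 0 ≤ x.im) :
    (csqrt x).im = Real.sqrt ((‖x‖ - x.re) / 2) := by
  rw [csqrt, one_div, Complex.cpow_inv_two_im_eq_sqrt hx]

lemma csqrt_im_of_im_neg {x : ℂ} (hx : x.im < 0) :
    (csqrt x).im = -Real.sqrt ((‖x‖ - x.re) / 2) := by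
  rw [csqrt, one_div, Complex.cpow_inv_two_im_eq_neg_sqrt hx]

lemma csqrt_re_pos {x : ℂ} (hx : x.im ≠ 0) : 0 < (csqrt x).re := by
  rw [csqrt_re]
  apply Real.sqrt_pos.2
  have := Complex.abs_re_lt_norm.2 hx
  have := abs_lt.1 this
  linarith [this.1]

lemma csqrt_im_pos {x : ℂ} (hx : 0 < x.im) : 0 < (csqrt x).im := by
  rw [csqrt_im_of_im_nonneg hx.le]
  apply Real.sqrt_pos.2
  have := Complex.abs_re_lt_norm.2 hx.ne'
  have := abs_lt.1 this
  linarith [this.2]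

lemma csqrt_im_neg {x : ℂ} (hx : x.im < 0) : (csqrt x).im < 0 := by
  rw [csqrt_im_of_im_neg hx]
  simp only [neg_neg, Left.neg_neg_iff]
  apply Real.sqrt_pos.2
  have := Complex.abs_re_lt_norm.2 hx.ne
  have := abs_lt.1 this
  linarith [this.2]

lemma csqrt_ne_zero {x : ℂ} (hx : x.im ≠ 0) : csqrt x ≠ 0 := by
  intro h
  have := csqrt_re_pos hx
  rw [h] at this
  simp at this

lemma csqrt_ofReal_pos {r : ℝ} (hr : 0 < r) : csqrt (r : ℂ) = (Real.sqrt r : ℂ) := by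
  rw [csqrt, show ((1:ℂ)/2) = ((1/2 : ℝ) : ℂ) by norm_num, ← Complex.ofReal_cpow hr.le,
    ← Real.sqrt_eq_rpow]

/-- uniqueness of square root with positive real part -/
lemma sq_eq_of_re_pos {u v : ℂ} (hu : 0 < u.re) (hv : 0 < v.re) (h : u * u = v * v) : u = v := by
  have h2 : (u - v) * (u + v) = 0 := by
    have : u * u - v * v = 0 := by rw [h]; ring
    linear_combination this
  rcases mul_eq_zero.1 h2 with h3 | h3
  · exact sub_eq_zero.1 h3
  · exfalso
    have : (u + v).re = 0 := by rw [h3]; simp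
    simp only [Complex.add_re] at this
    linarith

lemma csqrt_of_im_pos_eq (x : ℂ) (hx : 0 < x.im) : csqrt x = Complex.I * csqrt (-x) := by
  have hx' : (-x).im < 0 := by simp [hx]
  apply sq_eq_of_re_pos (csqrt_re_pos (by exact ne_of_gt hx))
  · simp only [Complex.mul_re, Complex.I_re, Complex.I_im]
    simp only [zero_mul, one_mul, zero_sub, neg_pos]
    exact csqrt_im_neg hx'
  · have h1 := csqrt_mul_self (x := x) (by intro h; rw [h] at hx; simp at hx)
    have h2 := csqrt_mul_self (x := -x) (by
      intro h
      have h9 : (-x).im = 0 := by rw [h]; simp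
      simp only [Complex.neg_im, neg_eq_zero] at h9
      exact hx.ne' h9)
    rw [h1]
    calc x = -(-x) := by ring
    _ = -(csqrt (-x) * csqrt (-x)) := by rw [h2]
    _ = Complex.I * csqrt (-x) * (Complex.I * csqrt (-x)) := by
        rw [show Complex.I * csqrt (-x) * (Complex.I * csqrt (-x))
            = Complex.I*Complex.I*(csqrt (-x) * csqrt (-x)) by ring, Complex.I_mul_I]; ring

lemma log_neg_of_im_pos {x : ℂ} (hx : 0 < x.im) :
    Complex.log (-x) = Complex.log x - Real.pi * Complex.I := by
  apply Complex.ext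
  · simp [Complex.log_re]
  · simp [Complex.log_im, Complex.arg_neg_eq_arg_sub_pi_of_im_pos hx]

noncomputable def tAux (a b P Q : ℝ) (z : ℂ) : ℂ :=
  (csqrt (z - ↑a) * ↑P) / (csqrt (z - ↑b) * ↑Q)

noncomputable def gAux : ℂ → ℂ := fun t => Complex.log ((1 - t) / (1 + t))

lemma sub_ofReal_ne_zero {z : ℂ} (hz : 0 < z.im) (r : ℝ) : z - ↑r ≠ 0 := by
  intro h
  have := congrArg Complex.im h
  simp at this
  linarith

lemma im_mul_conj_neg {a b : ℝ} (hab : a < b) {z : ℂ} (hz : 0 < z.im) :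
    (csqrt (z - ↑a) * (starRingEnd ℂ) (csqrt (z - ↑b))).im < 0 := by
  set w := csqrt (z - ↑a) with hw
  set v := csqrt (z - ↑b) with hv
  have hza : (z - (a:ℂ)).im = z.im := by simp
  have hzb : (z - (b:ℂ)).im = z.im := by simp
  have hwre : 0 < w.re := csqrt_re_pos (by rw [hza]; exact hz.ne')
  have hwim : 0 < w.im := csqrt_im_pos (by rw [hza]; exact hz)
  have hvre : 0 < v.re := csqrt_re_pos (by rw [hzb]; exact hz.ne')
  have hvim : 0 < v.im := csqrt_im_pos (by rw [hzb]; exact hz)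
  set c := w * (starRingEnd ℂ) v with hc
  have hcre : 0 < c.re := by
    simp only [hc, Complex.mul_re, Complex.conj_re, Complex.conj_im]
    nlinarith
  have hsq : (c * c).im = z.im * (a - b) := by
    have h1 : c * c = (z - ↑a) * (starRingEnd ℂ) (z - ↑b) := by
      have e1 : w * w = z - ↑a := csqrt_mul_self (sub_ofReal_ne_zero hz a)
      have e2 : v * v = z - ↑b := csqrt_mul_self (sub_ofReal_ne_zero hz b)
      calc c * c = (w * w) * (starRingEnd ℂ) (v * v) := by rw [map_mul]; ring
        _ = (z - ↑a) * (starRingEnd ℂ) (z - ↑b) := by rw [e1, e2]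
    rw [h1]
    simp only [Complex.mul_im, Complex.conj_re, Complex.conj_im, Complex.sub_re,
      Complex.sub_im, Complex.ofReal_re, Complex.ofReal_im]
    ring
  have hmul : (c * c).im = 2 * c.re * c.im := by
    simp only [Complex.mul_im]; ring
  nlinarith

lemma tAux_im_neg {a b : ℝ} (hab : a < b) {P Q : ℝ} (hP : 0 < P) (hQ : 0 < Q)
    {z : ℂ} (hz : 0 < z.im) : (tAux a b P Q z).im < 0 := by
  set w := csqrt (z - ↑a) with hw
  set v := csqrt (z - ↑b) with hv
  have hkey := im_mul_conj_neg hab hz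
  rw [← hw, ← hv] at hkey
  simp only [Complex.mul_im, Complex.conj_re, Complex.conj_im] at hkey
  have hvne : v ≠ 0 := csqrt_ne_zero (by simp; exact hz.ne')
  have hQ' : (Q:ℂ) ≠ 0 := by exact_mod_cast hQ.ne'
  have hN : 0 < Complex.normSq (v * ↑Q) := Complex.normSq_pos.2 (mul_ne_zero hvne hQ')
  rw [tAux, Complex.div_im]
  rw [← hw, ← hv]
  simp only [Complex.mul_im, Complex.mul_re, Complex.ofReal_re, Complex.ofReal_im]
  rw [div_sub_div_same, div_neg_iff]
  right
  exact ⟨by nlinarith [mul_pos hP hQ], hN⟩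

lemma im_frac_pos {t : ℂ} (ht : t.im < 0) : 0 < ((1 - t) / (1 + t)).im := by
  have h1 : (1 : ℂ) + t ≠ 0 := by
    intro h
    have := congrArg Complex.im h
    simp at this
    linarith
  have hN : 0 < Complex.normSq (1 + t) := Complex.normSq_pos.2 h1
  rw [Complex.div_im]
  simp only [Complex.sub_im, Complex.sub_re, Complex.one_im, Complex.one_re,
    Complex.add_im, Complex.add_re]
  rw [div_sub_div_same, div_pos_iff]
  left
  exact ⟨by nlinarith, hN⟩

lemma gAux_hasDeriv : HasDerivAt gAux (-2) 0 := by
  have hu : HasDerivAt (fun t : ℂ => 1 - t) (-1) 0 := by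
    simpa using (hasDerivAt_id (0:ℂ)).const_sub 1
  have hv : HasDerivAt (fun t : ℂ => 1 + t) 1 0 := by
    simpa using (hasDerivAt_id (0:ℂ)).const_add 1
  have hd : HasDerivAt (fun t : ℂ => (1 - t) / (1 + t)) (-2) 0 := by
    have := hu.div hv (by norm_num)
    norm_num at this
    exact this
  have hslit : ((1:ℂ) - 0) / (1 + 0) ∈ Complex.slitPlane := by
    norm_num [Complex.mem_slitPlane_iff]
  have h2 := hd.clog hslit
  convert h2 using 1 <;> norm_num
  rfl

section Tendstos

variable {a b : ℝ}

lemma hU_ev (a : ℝ) : ∀ᶠ z in 𝓝[{z : ℂ | 0 < z.im}] (↑a : ℂ), 0 < z.im :=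
  self_mem_nhdsWithin

lemma csqrt_sub_tendsto_zero (a : ℝ) :
    Tendsto (fun z : ℂ => csqrt (z - ↑a)) (𝓝 (↑a : ℂ)) (𝓝 0) := by
  have hc : ContinuousAt (fun x : ℂ => x ^ ((1:ℂ)/2)) 0 :=
    Complex.continuousAt_cpow_const_of_re_pos (Or.inl (by norm_num)) (by norm_num)
  have hsub : Tendsto (fun z : ℂ => z - (↑a : ℂ)) (𝓝 ↑a) (𝓝 0) := by
    simpa using (continuous_sub_right (↑a:ℂ)).tendsto (↑a : ℂ)
  have h2 := hc.tendsto.comp hsub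
  simp only [Function.comp_def] at h2
  rwa [show ((0:ℂ) ^ ((1:ℂ)/2)) = 0 from Complex.zero_cpow (by norm_num)] at h2

lemma v_tendsto (hab : a < b) :
    Tendsto (fun z : ℂ => csqrt (z - ↑b)) (𝓝[{z : ℂ | 0 < z.im}] ↑a)
      (𝓝 (Complex.I * ↑(Real.sqrt (b - a)))) := by
  have hba : (0:ℝ) < b - a := by linarith
  have hslit : ((↑(b - a) : ℂ)) ∈ Complex.slitPlane := by
    rw [Complex.mem_slitPlane_iff]
    left; simp [hba]
  have hc : ContinuousAt (fun z : ℂ => Complex.I * csqrt (↑b - z)) ↑a := by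
    apply ContinuousAt.mul continuousAt_const
    have hinner : ContinuousAt (fun z : ℂ => (↑b : ℂ) - z) ↑a :=
      (continuous_const.sub continuous_id).continuousAt
    have houter : ContinuousAt (fun x : ℂ => x ^ ((1:ℂ)/2)) ((↑b : ℂ) - ↑a) := by
      apply continuousAt_cpow_const
      rwa [show ((↑b : ℂ) - ↑a) = ↑(b - a) by push_cast; ring]
    exact houter.comp hinner
  have hval : Complex.I * csqrt ((↑b : ℂ) - ↑a) = Complex.I * ↑(Real.sqrt (b - a)) := by
    rw [show ((↑b : ℂ) - ↑a) = ↑(b - a) by push_cast; ring, csqrt_ofReal_pos hba]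
  have h2 : Tendsto (fun z : ℂ => Complex.I * csqrt (↑b - z)) (𝓝[{z : ℂ | 0 < z.im}] ↑a)
      (𝓝 (Complex.I * ↑(Real.sqrt (b - a)))) := by
    rw [← hval]
    exact hc.tendsto.mono_left nhdsWithin_le_nhds
  apply h2.congr'
  filter_upwards [hU_ev a] with z hz
  rw [csqrt_of_im_pos_eq (z - ↑b) (by simp [hz]), show -(z - (↑b:ℂ)) = ↑b - z by ring]

variable {P Q : ℝ}

lemma tAux_tendsto (hab : a < b) (hP : 0 < P) (hQ : 0 < Q) :
    Tendsto (tAux a b P Q) (𝓝[{z : ℂ | 0 < z.im}] ↑a) (𝓝[≠] 0) := by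
  rw [tendsto_nhdsWithin_iff]
  constructor
  · have hnum : Tendsto (fun z : ℂ => csqrt (z - ↑a) * ↑P) (𝓝[{z : ℂ | 0 < z.im}] ↑a) (𝓝 0) := by
      simpa using ((csqrt_sub_tendsto_zero a).mono_left nhdsWithin_le_nhds).mul_const (↑P : ℂ)
    have hden : Tendsto (fun z : ℂ => csqrt (z - ↑b) * ↑Q) (𝓝[{z : ℂ | 0 < z.im}] ↑a)
        (𝓝 (Complex.I * ↑(Real.sqrt (b - a)) * ↑Q)) := (v_tendsto hab).mul_const _
    have hne : Complex.I * ↑(Real.sqrt (b - a)) * (↑Q:ℂ) ≠ 0 := by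
      apply mul_ne_zero (mul_ne_zero Complex.I_ne_zero _) _
      · exact_mod_cast (Real.sqrt_pos.2 (by linarith)).ne'
      · exact_mod_cast hQ.ne'
    have := hnum.div hden hne
    rw [zero_div] at this
    exact this
  · filter_upwards [hU_ev a] with z hz
    intro h0
    have := tAux_im_neg hab hP hQ hz
    rw [Set.mem_singleton_iff.1 h0] at this
    simp at this

lemma slope_tendsto (hab : a < b) (hP : 0 < P) (hQ : 0 < Q) :
    Tendsto (fun z => gAux (tAux a b P Q z) / tAux a b P Q z)
      (𝓝[{z : ℂ | 0 < z.im}] ↑a) (𝓝 (-2)) := by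
  have h := (hasDerivAt_iff_tendsto_slope.mp gAux_hasDeriv).comp (tAux_tendsto hab hP hQ)
  have heq : (fun z => gAux (tAux a b P Q z) / tAux a b P Q z)
      = (slope gAux 0) ∘ (tAux a b P Q) := by
    funext z
    simp [slope_def_field, Function.comp, gAux, Complex.log_one]
  rw [heq]
  exact h

lemma t_div_w_tendsto (hab : a < b) (hP : 0 < P) (hQ : 0 < Q) :
    Tendsto (fun z => tAux a b P Q z / csqrt (z - ↑a)) (𝓝[{z : ℂ | 0 < z.im}] ↑a)
      (𝓝 ((↑P : ℂ) / (Complex.I * ↑(Real.sqrt (b - a)) * ↑Q))) := by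
  have hden : Tendsto (fun z : ℂ => csqrt (z - ↑b) * ↑Q) (𝓝[{z : ℂ | 0 < z.im}] ↑a)
      (𝓝 (Complex.I * ↑(Real.sqrt (b - a)) * ↑Q)) := (v_tendsto hab).mul_const _
  have hne : Complex.I * ↑(Real.sqrt (b - a)) * (↑Q:ℂ) ≠ 0 := by
    apply mul_ne_zero (mul_ne_zero Complex.I_ne_zero _) _
    · exact_mod_cast (Real.sqrt_pos.2 (by linarith)).ne'
    · exact_mod_cast hQ.ne'
  have h2 := tendsto_const_nhds (α := ℂ) (x := (↑P:ℂ)) |>.div hden hne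
  apply h2.congr'
  filter_upwards [hU_ev a] with z hz
  have hw : csqrt (z - ↑a) ≠ 0 := csqrt_ne_zero (by simp [hz.ne'])
  have hv : csqrt (z - ↑b) ≠ 0 := csqrt_ne_zero (by simp [hz.ne'])
  have hQ' : (↑Q:ℂ) ≠ 0 := by exact_mod_cast hQ.ne'
  rw [tAux]
  simp only [Pi.div_apply]
  field_simp

end Tendstos

lemma limit_val (P Q c : ℝ) (hQ : Q ≠ 0) (hc : c ≠ 0) :
    (-2 : ℂ) * ((↑P : ℂ) / (Complex.I * ↑c * ↑Q)) = 2 * Complex.I * (↑P / ↑Q) / ↑c := by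
  have hI := Complex.I_ne_zero
  have hQ' : (↑Q : ℂ) ≠ 0 := by exact_mod_cast hQ
  have hc' : (↑c : ℂ) ≠ 0 := by exact_mod_cast hc
  field_simp
  ring_nf
  rw [Complex.I_sq]
  ring

section Factor

variable {a b xj : ℝ}

lemma Rlow_eq (hab : a < b) (hja : xj < a) {z : ℂ} (hz : 0 < z.im) :
    Rlow a b xj z = (tAux a b (Real.sqrt (b - xj)) (Real.sqrt (a - xj)) z - 1) /
      (tAux a b (Real.sqrt (b - xj)) (Real.sqrt (a - xj)) z + 1) := by
  set P := Real.sqrt (b - xj) with hPdef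
  set Q := Real.sqrt (a - xj) with hQdef
  have hP : 0 < P := Real.sqrt_pos.2 (by linarith)
  have hQ : 0 < Q := Real.sqrt_pos.2 (by linarith)
  set w := csqrt (z - ↑a) with hw
  set v := csqrt (z - ↑b) with hv
  have hwim : 0 < w.im := csqrt_im_pos (by simp [hz])
  have hvim : 0 < v.im := csqrt_im_pos (by simp [hz])
  have hvne : v ≠ 0 := csqrt_ne_zero (by simp [hz.ne'])
  have hQ' : (↑Q:ℂ) ≠ 0 := by exact_mod_cast hQ.ne'
  have hvQ : v * ↑Q ≠ 0 := mul_ne_zero hvne hQ'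
  have ht := tAux_im_neg hab hP hQ hz
  have hden : w * ↑P + v * ↑Q ≠ 0 := by
    intro h
    have := congrArg Complex.im h
    simp only [Complex.add_im, Complex.mul_im, Complex.ofReal_re, Complex.ofReal_im,
      Complex.zero_im] at this
    nlinarith
  have htp1 : tAux a b P Q z + 1 ≠ 0 := by
    intro h
    have := congrArg Complex.im h
    simp only [Complex.add_im, Complex.one_im, Complex.zero_im] at this
    linarith
  rw [Rlow, ← hw, ← hv, ← hPdef, ← hQdef, div_eq_div_iff hden htp1, tAux, ← hw, ← hv]
  field_simp

lemma Rhigh_eq (hab : a < b) (hbj : b < xj) {z : ℂ} (hz : 0 < z.im) :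
    Rhigh a b xj z = (1 - tAux a b (Real.sqrt (xj - b)) (Real.sqrt (xj - a)) z) /
      (1 + tAux a b (Real.sqrt (xj - b)) (Real.sqrt (xj - a)) z) := by
  set P := Real.sqrt (xj - b) with hPdef
  set Q := Real.sqrt (xj - a) with hQdef
  have hP : 0 < P := Real.sqrt_pos.2 (by linarith)
  have hQ : 0 < Q := Real.sqrt_pos.2 (by linarith)
  set w := csqrt (z - ↑a) with hw
  set v := csqrt (z - ↑b) with hv
  have hwim : 0 < w.im := csqrt_im_pos (by simp [hz])
  have hvim : 0 < v.im := csqrt_im_pos (by simp [hz])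
  have hvne : v ≠ 0 := csqrt_ne_zero (by simp [hz.ne'])
  have hQ' : (↑Q:ℂ) ≠ 0 := by exact_mod_cast hQ.ne'
  have ht := tAux_im_neg hab hP hQ hz
  have hden : v * ↑Q + w * ↑P ≠ 0 := by
    intro h
    have := congrArg Complex.im h
    simp only [Complex.add_im, Complex.mul_im, Complex.ofReal_re, Complex.ofReal_im,
      Complex.zero_im] at this
    nlinarith
  have htp1 : 1 + tAux a b P Q z ≠ 0 := by
    intro h
    have := congrArg Complex.im h
    simp only [Complex.add_im, Complex.one_im, Complex.zero_im] at this
    linarith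
  rw [Rhigh, ← hw, ← hv, ← hPdef, ← hQdef, div_eq_div_iff hden htp1, tAux, ← hw, ← hv]
  field_simp

lemma Rlow_ne_zero (hab : a < b) (hja : xj < a) {z : ℂ} (hz : 0 < z.im) :
    Rlow a b xj z ≠ 0 := by
  have hP : 0 < Real.sqrt (b - xj) := Real.sqrt_pos.2 (by linarith)
  have hQ : 0 < Real.sqrt (a - xj) := Real.sqrt_pos.2 (by linarith)
  have ht := tAux_im_neg hab hP hQ hz
  rw [Rlow_eq hab hja hz]
  apply div_ne_zero
  · intro h
    have := congrArg Complex.im h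
    simp only [Complex.sub_im, Complex.one_im, Complex.zero_im] at this
    linarith
  · intro h
    have := congrArg Complex.im h
    simp only [Complex.add_im, Complex.one_im, Complex.zero_im] at this
    linarith

lemma Rhigh_ne_zero (hab : a < b) (hbj : b < xj) {z : ℂ} (hz : 0 < z.im) :
    Rhigh a b xj z ≠ 0 := by
  have hP : 0 < Real.sqrt (xj - b) := Real.sqrt_pos.2 (by linarith)
  have hQ : 0 < Real.sqrt (xj - a) := Real.sqrt_pos.2 (by linarith)
  have ht := tAux_im_neg hab hP hQ hz
  rw [Rhigh_eq hab hbj hz]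
  apply div_ne_zero
  · intro h
    have := congrArg Complex.im h
    simp only [Complex.sub_im, Complex.one_im, Complex.zero_im] at this
    linarith
  · intro h
    have := congrArg Complex.im h
    simp only [Complex.add_im, Complex.one_im, Complex.zero_im] at this
    linarith

lemma low_log_eq (hab : a < b) (hja : xj < a) {z : ℂ} (hz : 0 < z.im) :
    Complex.log (Rlow a b xj z) + ↑Real.pi * Complex.I
      = gAux (tAux a b (Real.sqrt (b - xj)) (Real.sqrt (a - xj)) z) := by
  set P := Real.sqrt (b - xj) with hPdef
  set Q := Real.sqrt (a - xj) with hQdef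
  have hP : 0 < P := Real.sqrt_pos.2 (by linarith)
  have hQ : 0 < Q := Real.sqrt_pos.2 (by linarith)
  set t := tAux a b P Q z with htdef
  have ht := tAux_im_neg hab hP hQ hz
  have him : 0 < ((1 - t) / (1 + t)).im := im_frac_pos ht
  have hneg : (t - 1) / (t + 1) = -((1 - t) / (1 + t)) := by
    rw [show (t - 1) = -(1 - t) by ring, show t + 1 = 1 + t by ring, neg_div]
  rw [Rlow_eq hab hja hz, ← htdef, hneg, log_neg_of_im_pos him, gAux]
  ring

lemma high_log_eq (hab : a < b) (hbj : b < xj) {z : ℂ} (hz : 0 < z.im) :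
    Complex.log (Rhigh a b xj z)
      = gAux (tAux a b (Real.sqrt (xj - b)) (Real.sqrt (xj - a)) z) := by
  rw [Rhigh_eq hab hbj hz, gAux]

lemma low_log_tendsto (hab : a < b) (hja : xj < a) :
    Tendsto (fun z : ℂ => (Complex.log (Rlow a b xj z) + ↑Real.pi * Complex.I) / csqrt (z - ↑a))
      (𝓝[{z : ℂ | 0 < z.im}] ↑a)
      (𝓝 (2 * Complex.I * (↑(Real.sqrt (b - xj)) / ↑(Real.sqrt (a - xj))) / ↑(Real.sqrt (b - a)))) := by
  set P := Real.sqrt (b - xj) with hPdef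
  set Q := Real.sqrt (a - xj) with hQdef
  have hP : 0 < P := Real.sqrt_pos.2 (by linarith)
  have hQ : 0 < Q := Real.sqrt_pos.2 (by linarith)
  have hlim := (slope_tendsto hab hP hQ).mul (t_div_w_tendsto hab hP hQ)
  rw [show (-2 : ℂ) * ((↑P : ℂ) / (Complex.I * ↑(Real.sqrt (b - a)) * ↑Q))
      = 2 * Complex.I * (↑P / ↑Q) / ↑(Real.sqrt (b - a)) from
    limit_val P Q _ hQ.ne' (Real.sqrt_pos.2 (by linarith : (0:ℝ) < b - a)).ne'] at hlim
  apply hlim.congr'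
  filter_upwards [hU_ev a] with z hz
  have ht := tAux_im_neg hab hP hQ hz
  have htne : tAux a b P Q z ≠ 0 := by
    intro h
    rw [h] at ht
    simp at ht
  rw [low_log_eq hab hja hz, ← hPdef, ← hQdef]
  field_simp

lemma high_log_tendsto (hab : a < b) (hbj : b < xj) :
    Tendsto (fun z : ℂ => Complex.log (Rhigh a b xj z) / csqrt (z - ↑a))
      (𝓝[{z : ℂ | 0 < z.im}] ↑a)
      (𝓝 (2 * Complex.I * (↑(Real.sqrt (xj - b)) / ↑(Real.sqrt (xj - a))) / ↑(Real.sqrt (b - a)))) := by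
  set P := Real.sqrt (xj - b) with hPdef
  set Q := Real.sqrt (xj - a) with hQdef
  have hP : 0 < P := Real.sqrt_pos.2 (by linarith)
  have hQ : 0 < Q := Real.sqrt_pos.2 (by linarith)
  have hlim := (slope_tendsto hab hP hQ).mul (t_div_w_tendsto hab hP hQ)
  rw [show (-2 : ℂ) * ((↑P : ℂ) / (Complex.I * ↑(Real.sqrt (b - a)) * ↑Q))
      = 2 * Complex.I * (↑P / ↑Q) / ↑(Real.sqrt (b - a)) from
    limit_val P Q _ hQ.ne' (Real.sqrt_pos.2 (by linarith : (0:ℝ) < b - a)).ne'] at hlim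
  apply hlim.congr'
  filter_upwards [hU_ev a] with z hz
  have ht := tAux_im_neg hab hP hQ hz
  have htne : tAux a b P Q z ≠ 0 := by
    intro h
    rw [h] at ht
    simp at ht
  rw [high_log_eq hab hbj hz, ← hPdef, ← hQdef]
  field_simp

end Factor


noncomputable def EAux (u : ℂ) : ℂ := if u = 0 then 1 else (Complex.exp u - 1) / u

lemma exp_eq_one_add_mul_EAux (u : ℂ) : Complex.exp u = 1 + u * EAux u := by
  by_cases h : u = 0
  · simp [h, EAux]
  · rw [EAux, if_neg h]
    field_simp
    ring

lemma EAux_tendsto : Tendsto EAux (𝓝 (0:ℂ)) (𝓝 1) := by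
  rw [← nhdsNE_sup_pure (0:ℂ), Filter.tendsto_sup]
  constructor
  · have h := hasDerivAt_iff_tendsto_slope.mp (Complex.hasDerivAt_exp 0)
    rw [Complex.exp_zero] at h
    apply h.congr'
    filter_upwards [self_mem_nhdsWithin] with u hu
    have hu' : u ≠ 0 := hu
    rw [slope_def_field, EAux, if_neg hu', Complex.exp_zero, sub_zero]
  · have : EAux 0 = 1 := by simp [EAux]
    rw [← this]
    exact tendsto_pure_nhds EAux 0


theorem szegoDGap_expansion_at_xpm1
    (m p : ℕ) (hm : 1 ≤ m) (hp : 1 ≤ p) (hpm : p ≤ m) (x s : ℕ → ℝ)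
    (hx : ∀ j, j < m → x j < x (j + 1))
    (hs : ∀ j, 1 ≤ j → j ≤ m → j ≠ p → 0 < s j)
    (hs0 : s 0 = 1) (hsm : s (m + 1) = 1) :
    Filter.Tendsto
      (fun z : ℂ => (szegoDGap m p x s z - ↑(Real.sqrt (s (p - 1)))) / csqrt (z - ↑(x (p - 1))))
      (nhdsWithin (↑(x (p - 1))) {z : ℂ | 0 < z.im})
      (nhds (2 * Complex.I * ↑(Real.sqrt (s (p - 1))) *
          (∑ j ∈ (Finset.Icc 0 m).filter (fun j => j ≠ p - 1 ∧ j ≠ p),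
            betaCoef s j * ↑(Real.sqrt |x j - x p| / Real.sqrt |x j - x (p - 1)|)) /
          ↑(Real.sqrt (x p - x (p - 1))))) := by
  classical
  set a : ℝ := x (p - 1) with ha
  set b : ℝ := x p with hb
  have hab : a < b := by
    have h := hx (p - 1) (by omega)
    have h2 : p - 1 + 1 = p := by omega
    rw [h2] at h
    exact h
  have hchain : ∀ i k : ℕ, i < k → k ≤ m → x i < x k := by
    intro i k
    induction k with
    | zero => omega
    | succ n ih =>
      intro hik hkm
      rcases Nat.lt_succ_iff_lt_or_eq.mp hik with h | h
      · exact lt_trans (ih h (by omega)) (hx n (by omega))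
      · subst h; exact hx i (by omega)
  have hsprev_pos : 0 < s (p - 1) := by
    rcases Nat.eq_zero_or_pos (p - 1) with h | h
    · rw [h, hs0]; norm_num
    · exact hs (p - 1) h (by omega) (by omega)
  have hspos : ∀ j, j ≤ p - 1 → 0 < s j := by
    intro j hj
    rcases Nat.eq_zero_or_pos j with h | h
    · rw [h, hs0]; norm_num
    · exact hs j h (by omega) (by omega)
  set c : ℝ := Real.sqrt (s (p - 1)) with hc
  have hcpos : 0 < c := Real.sqrt_pos.2 hsprev_pos
  have hlowlt : ∀ j ∈ Finset.range (p - 1), x j < a :=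
    fun j hj => hchain j (p - 1) (Finset.mem_range.1 hj) (by omega)
  have hhighgt : ∀ j ∈ Finset.Icc (p + 1) m, b < x j := by
    intro j hj
    have h2 := Finset.mem_Icc.1 hj
    exact hchain p j (by omega) h2.2
  set S : ℂ → ℂ := fun z =>
    (∑ j ∈ Finset.range (p - 1), betaCoef s j * Complex.log (Rlow a b (x j) z)) +
    ∑ j ∈ Finset.Icc (p + 1) m, betaCoef s j * Complex.log (Rhigh a b (x j) z) with hSdef
  set L0 : ℂ := -(↑Real.pi * Complex.I) * ∑ j ∈ Finset.range (p - 1), betaCoef s j with hL0def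
  -- D = exp S on the upper half plane
  have hD : ∀ z : ℂ, 0 < z.im → szegoDGap m p x s z = Complex.exp (S z) := by
    intro z hz
    rw [hSdef]
    simp only [szegoDGap, if_pos hz]
    rw [← ha, ← hb, Complex.exp_add, Complex.exp_sum, Complex.exp_sum]
    congr 1
    · apply Finset.prod_congr rfl
      intro j hj
      rw [Complex.cpow_def_of_ne_zero (Rlow_ne_zero hab (hlowlt j hj) hz), mul_comm]
    · apply Finset.prod_congr rfl
      intro j hj
      rw [Complex.cpow_def_of_ne_zero (Rhigh_ne_zero hab (hhighgt j hj) hz), mul_comm]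
  -- exp L0 = c
  have hsum_beta : ∑ j ∈ Finset.range (p - 1), betaCoef s j
      = 1 / (2 * ↑Real.pi * Complex.I) * ↑(-Real.log (s (p - 1))) := by
    simp only [betaCoef]
    rw [← Finset.mul_sum]
    congr 1
    have hlog : ∀ j ∈ Finset.range (p - 1),
        (↑(Real.log (s j / s (j + 1))) : ℂ) = ↑(Real.log (s j) - Real.log (s (j + 1))) := by
      intro j hj
      have hj' := Finset.mem_range.1 hj
      rw [Real.log_div (hspos j (by omega)).ne' (hspos (j + 1) (by omega)).ne']
    rw [Finset.sum_congr rfl hlog]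
    rw [show ∑ j ∈ Finset.range (p - 1),
          (↑(Real.log (s j) - Real.log (s (j + 1))) : ℂ)
        = ((∑ j ∈ Finset.range (p - 1),
            (Real.log (s j) - Real.log (s (j + 1)))) : ℝ) by push_cast; ring]
    rw [Finset.sum_range_sub' (fun j => Real.log (s j)), hs0, Real.log_one]
    norm_num
  have hL0val : L0 = ↑(Real.log (s (p - 1)) / 2) := by
    rw [hL0def, hsum_beta]
    have hπ : (↑Real.pi : ℂ) ≠ 0 := Complex.ofReal_ne_zero.2 Real.pi_ne_zero
    have hI := Complex.I_ne_zero
    push_cast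
    field_simp
  have hexpL0 : Complex.exp L0 = ↑c := by
    rw [hL0val, ← Complex.ofReal_exp, hc]
    congr 1
    rw [← Real.log_sqrt hsprev_pos.le, Real.exp_log (Real.sqrt_pos.2 hsprev_pos)]
  -- the derivative-coefficient sum
  set K : ℂ := (∑ j ∈ Finset.range (p - 1), betaCoef s j *
        (2 * Complex.I * (↑(Real.sqrt (b - x j)) / ↑(Real.sqrt (a - x j))) / ↑(Real.sqrt (b - a)))) +
      ∑ j ∈ Finset.Icc (p + 1) m, betaCoef s j *
        (2 * Complex.I * (↑(Real.sqrt (x j - b)) / ↑(Real.sqrt (x j - a))) / ↑(Real.sqrt (b - a)))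
    with hKdef
  have hKtendsto : Tendsto (fun z : ℂ => (S z - L0) / csqrt (z - ↑a))
      (𝓝[{z : ℂ | 0 < z.im}] ↑a) (𝓝 K) := by
    have hlow : Tendsto (fun z : ℂ => ∑ j ∈ Finset.range (p - 1), betaCoef s j *
        ((Complex.log (Rlow a b (x j) z) + ↑Real.pi * Complex.I) / csqrt (z - ↑a)))
        (𝓝[{z : ℂ | 0 < z.im}] ↑a)
        (𝓝 (∑ j ∈ Finset.range (p - 1), betaCoef s j *
          (2 * Complex.I * (↑(Real.sqrt (b - x j)) / ↑(Real.sqrt (a - x j))) / ↑(Real.sqrt (b - a))))) :=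
      tendsto_finset_sum _ fun j hj => (low_log_tendsto hab (hlowlt j hj)).const_mul _
    have hhigh : Tendsto (fun z : ℂ => ∑ j ∈ Finset.Icc (p + 1) m, betaCoef s j *
        (Complex.log (Rhigh a b (x j) z) / csqrt (z - ↑a)))
        (𝓝[{z : ℂ | 0 < z.im}] ↑a)
        (𝓝 (∑ j ∈ Finset.Icc (p + 1) m, betaCoef s j *
          (2 * Complex.I * (↑(Real.sqrt (x j - b)) / ↑(Real.sqrt (x j - a))) / ↑(Real.sqrt (b - a))))) :=
      tendsto_finset_sum _ fun j hj => (high_log_tendsto hab (hhighgt j hj)).const_mul _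
    rw [hKdef]
    apply (hlow.add hhigh).congr
    intro z
    rw [hSdef, hL0def]
    simp only [← mul_div_assoc]
    rw [← Finset.sum_div, ← Finset.sum_div, ← add_div]
    congr 1
    simp only [mul_add, Finset.sum_add_distrib]
    rw [← Finset.sum_mul]
    ring
  have hw0 : Tendsto (fun z : ℂ => csqrt (z - ↑a)) (𝓝[{z : ℂ | 0 < z.im}] ↑a) (𝓝 0) :=
    (csqrt_sub_tendsto_zero a).mono_left nhdsWithin_le_nhds
  have hS0 : Tendsto (fun z : ℂ => S z - L0) (𝓝[{z : ℂ | 0 < z.im}] ↑a) (𝓝 0) := by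
    have h2 := hKtendsto.mul hw0
    rw [mul_zero] at h2
    apply h2.congr'
    filter_upwards [hU_ev a] with z hz
    exact div_mul_cancel₀ _ (csqrt_ne_zero (by simp [hz.ne']))
  have hmain : Tendsto (fun z : ℂ => ↑c * ((S z - L0) / csqrt (z - ↑a)) * EAux (S z - L0))
      (𝓝[{z : ℂ | 0 < z.im}] ↑a) (𝓝 (↑c * K * 1)) :=
    (tendsto_const_nhds.mul hKtendsto).mul (EAux_tendsto.comp hS0)
  have hev : (fun z : ℂ => ↑c * ((S z - L0) / csqrt (z - ↑a)) * EAux (S z - L0))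
      =ᶠ[𝓝[{z : ℂ | 0 < z.im}] ↑a]
      (fun z : ℂ => (szegoDGap m p x s z - ↑c) / csqrt (z - ↑a)) := by
    filter_upwards [hU_ev a] with z hz
    have hw : csqrt (z - ↑a) ≠ 0 := csqrt_ne_zero (by simp [hz.ne'])
    rw [hD z hz]
    have h1 : Complex.exp (S z) = ↑c * (1 + (S z - L0) * EAux (S z - L0)) := by
      rw [← exp_eq_one_add_mul_EAux, ← hexpL0, ← Complex.exp_add]
      congr 1
      ring
    rw [h1]
    field_simp
    ring
  -- final value identity
  have hTsplit : (Finset.Icc 0 m).filter (fun j => j ≠ p - 1 ∧ j ≠ p)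
      = Finset.range (p - 1) ∪ Finset.Icc (p + 1) m := by
    ext j
    simp only [Finset.mem_filter, Finset.mem_Icc, Finset.mem_range, Finset.mem_union]
    omega
  have hdisj : Disjoint (Finset.range (p - 1)) (Finset.Icc (p + 1) m) := by
    rw [Finset.disjoint_left]
    intro j hj1 hj2
    simp only [Finset.mem_range] at hj1
    simp only [Finset.mem_Icc] at hj2
    omega
  have hfinal_eq : ↑c * K * 1 = 2 * Complex.I * (↑c : ℂ) *
      (∑ j ∈ (Finset.Icc 0 m).filter (fun j => j ≠ p - 1 ∧ j ≠ p),
        betaCoef s j * ↑(Real.sqrt |x j - b| / Real.sqrt |x j - a|)) / ↑(Real.sqrt (b - a)) := by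
    rw [hTsplit, Finset.sum_union hdisj]
    have hsum1 : ∑ j ∈ Finset.range (p - 1),
        betaCoef s j * (↑(Real.sqrt |x j - b| / Real.sqrt |x j - a|) : ℂ)
        = ∑ j ∈ Finset.range (p - 1),
          betaCoef s j * (↑(Real.sqrt (b - x j)) / ↑(Real.sqrt (a - x j))) := by
      apply Finset.sum_congr rfl
      intro j hj
      have h1 : |x j - b| = b - x j := by
        rw [abs_of_neg (by linarith [hlowlt j hj])]; ring
      have h2 : |x j - a| = a - x j := by
        rw [abs_of_neg (by linarith [hlowlt j hj])]; ring
      rw [h1, h2]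
      push_cast
      ring
    have hsum2 : ∑ j ∈ Finset.Icc (p + 1) m,
        betaCoef s j * (↑(Real.sqrt |x j - b| / Real.sqrt |x j - a|) : ℂ)
        = ∑ j ∈ Finset.Icc (p + 1) m,
          betaCoef s j * (↑(Real.sqrt (x j - b)) / ↑(Real.sqrt (x j - a))) := by
      apply Finset.sum_congr rfl
      intro j hj
      have h1 : |x j - b| = x j - b := abs_of_pos (by linarith [hhighgt j hj])
      have h2 : |x j - a| = x j - a := abs_of_pos (by linarith [hhighgt j hj])
      rw [h1, h2]
      push_cast
      ring
    rw [hsum1, hsum2, hKdef, mul_one]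
    simp only [mul_add, Finset.mul_sum, add_div, Finset.sum_div]
    congr 1
    · apply Finset.sum_congr rfl
      intro j hj
      ring
    · apply Finset.sum_congr rfl
      intro j hj
      ring
  rw [← hfinal_eq]
  exact hmain.congr' hev
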